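/- arXiv:1212.1274 — 3 statements merged into one kernel-verified Lean document; each statement's English description precedes it below -/
import Mathlib

section
/- Let A and A' be two real symmetric n×n matrices. Then the Hausdorff distance between their spectra, computed with respect to the standard distance on ℝ, is at most the operator norm of A − A' (induced by the supremum norm on ℝⁿ): d(Spec(A), Spec(A')) ≤ |A − A'|. -/
/-!
Let `μ` be an eigenvalue of `A` with unit eigenvector `v`. Expanding `v` in an orthonormal
eigenbasis of `A'` shows `dist(μ, Spec A') ≤ ‖(A' - μ) v‖₂ = ‖(A' - A) v‖₂`. The same expansion
for the symmetric matrix `A' - A` bounds `‖(A' - A) v‖₂` by the largest `|λ|` with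
`λ ∈ Spec(A' - A)`, and every eigenvalue is bounded in absolute value by any operator norm, in
particular the one induced by the supremum norm. Exchanging `A` and `A'` bounds the Hausdorff
distance.
-/

/-- The operator norm of a real `n × n` matrix acting on `ℝⁿ` equipped with the
supremum norm. -/
noncomputable def matOpNorm {n : ℕ} (M : Matrix (Fin n) (Fin n) ℝ) : ℝ :=
  ‖LinearMap.toContinuousLinearMap (Matrix.toLin' M)‖

open Matrix Metric
open scoped RealInnerProductSpace

section OpNorm

variable {n : ℕ}

lemma spectrum_toContinuousLinearMap_toLin' (M : Matrix (Fin n) (Fin n) ℝ) :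
    spectrum ℝ (LinearMap.toContinuousLinearMap (toLin' M)) = spectrum ℝ M := by
  rw [ContinuousLinearMap.spectrum_eq, LinearMap.coe_toContinuousLinearMap, spectrum_toLin']

lemma abs_le_matOpNorm_of_mem_spectrum {M : Matrix (Fin n) (Fin n) ℝ} {μ : ℝ}
    (hμ : μ ∈ spectrum ℝ M) : |μ| ≤ matOpNorm M := by
  rw [← spectrum_toContinuousLinearMap_toLin'] at hμ
  cases isEmpty_or_nonempty (Fin n)
  · simp [spectrum.of_subsingleton] at hμ
  · exact spectrum.norm_le_norm_of_mem hμ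

lemma matOpNorm_nonneg (M : Matrix (Fin n) (Fin n) ℝ) : 0 ≤ matOpNorm M :=
  norm_nonneg _

lemma matOpNorm_sub_comm (A B : Matrix (Fin n) (Fin n) ℝ) :
    matOpNorm (A - B) = matOpNorm (B - A) := by
  simp only [matOpNorm, map_sub, norm_sub_rev]

end OpNorm

namespace Matrix.IsHermitian

variable {ι : Type*} [Fintype ι] [DecidableEq ι] {M : Matrix ι ι ℝ}

lemma toEuclideanLin_eigenvectorBasis (hM : M.IsHermitian) (j : ι) :
    toEuclideanLin M (hM.eigenvectorBasis j) = hM.eigenvalues j • hM.eigenvectorBasis j := by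
  apply WithLp.ofLp_injective
  simpa [toLpLin_apply] using hM.mulVec_eigenvectorBasis j

lemma norm_toEuclideanLin_sub_smul_sq (hM : M.IsHermitian) (μ : ℝ)
    (v : EuclideanSpace ℝ ι) :
    ‖toEuclideanLin M v - μ • v‖ ^ 2
      = ∑ j, (hM.eigenvalues j - μ) ^ 2 * ⟪hM.eigenvectorBasis j, v⟫ ^ 2 := by
  rw [← hM.eigenvectorBasis.sum_sq_inner_right]
  congr 1 with j
  have hsymm := isSymmetric_toEuclideanLin_iff.mpr hM
  rw [inner_sub_right, real_inner_smul_right, ← hsymm, toEuclideanLin_eigenvectorBasis,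
    real_inner_smul_left]
  ring

lemma infDist_spectrum_mul_norm_le (hM : M.IsHermitian) (μ : ℝ) (v : EuclideanSpace ℝ ι) :
    infDist μ (spectrum ℝ M) * ‖v‖ ≤ ‖toEuclideanLin M v - μ • v‖ := by
  set d := infDist μ (spectrum ℝ M)
  have hd : ∀ j, d ^ 2 ≤ (hM.eigenvalues j - μ) ^ 2 := fun j => by
    rw [← sq_abs (_ - μ), abs_sub_comm, ← Real.dist_eq]
    gcongr
    · exact infDist_nonneg
    · exact infDist_le_dist_of_mem (hM.eigenvalues_mem_spectrum_real j)
  rw [← sq_le_sq₀ (mul_nonneg infDist_nonneg (norm_nonneg _)) (norm_nonneg _),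
    norm_toEuclideanLin_sub_smul_sq hM, mul_pow, ← hM.eigenvectorBasis.sum_sq_inner_right, Finset.mul_sum]
  exact Finset.sum_le_sum fun j _ => mul_le_mul_of_nonneg_right (hd j) (sq_nonneg _)

end Matrix.IsHermitian

lemma Matrix.IsHermitian.norm_toEuclideanLin_le_matOpNorm {n : ℕ}
    {M : Matrix (Fin n) (Fin n) ℝ} (hM : M.IsHermitian) (v : EuclideanSpace ℝ (Fin n)) :
    ‖toEuclideanLin M v‖ ≤ matOpNorm M * ‖v‖ := by
  have hbound : ∀ j, hM.eigenvalues j ^ 2 ≤ matOpNorm M ^ 2 := fun j => by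
    rw [← sq_abs]
    gcongr
    exact abs_le_matOpNorm_of_mem_spectrum (hM.eigenvalues_mem_spectrum_real j)
  have h := hM.norm_toEuclideanLin_sub_smul_sq 0 v
  simp only [zero_smul, sub_zero] at h
  rw [← sq_le_sq₀ (norm_nonneg _) (mul_nonneg (matOpNorm_nonneg M) (norm_nonneg v)), h, mul_pow,
    ← hM.eigenvectorBasis.sum_sq_inner_right, Finset.mul_sum]
  exact Finset.sum_le_sum fun j _ => mul_le_mul_of_nonneg_right (hbound j) (sq_nonneg _)

lemma infDist_spectrum_le_matOpNorm_sub {n : ℕ} {A A' : Matrix (Fin n) (Fin n) ℝ}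
    (hA : A.IsHermitian) (hA' : A'.IsHermitian) {μ : ℝ} (hμ : μ ∈ spectrum ℝ A) :
    infDist μ (spectrum ℝ A') ≤ matOpNorm (A' - A) := by
  rw [hA.spectrum_real_eq_range_eigenvalues] at hμ
  obtain ⟨i, rfl⟩ := hμ
  set v := hA.eigenvectorBasis i
  have hv : ‖v‖ = 1 := hA.eigenvectorBasis.orthonormal.1 i
  calc infDist (hA.eigenvalues i) (spectrum ℝ A')
      = infDist (hA.eigenvalues i) (spectrum ℝ A') * ‖v‖ := by rw [hv, mul_one]
    _ ≤ ‖toEuclideanLin A' v - hA.eigenvalues i • v‖ := hA'.infDist_spectrum_mul_norm_le _ v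
    _ = ‖toEuclideanLin (A' - A) v‖ := by
      rw [map_sub, LinearMap.sub_apply, hA.toEuclideanLin_eigenvectorBasis]
    _ ≤ matOpNorm (A' - A) * ‖v‖ := (hA'.sub hA).norm_toEuclideanLin_le_matOpNorm v
    _ = matOpNorm (A' - A) := by rw [hv, mul_one]

/-- For real symmetric matrices `A, A'`, the Hausdorff distance between
their spectra is at most the operator norm of `A − A'`. -/
theorem stmt4 (n : ℕ) (A A' : Matrix (Fin n) (Fin n) ℝ)
    (hA : A.IsSymm) (hA' : A'.IsSymm) :
    Metric.hausdorffDist (spectrum ℝ A) (spectrum ℝ A') ≤ matOpNorm (A - A') := by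
  rw [← isHermitian_iff_isSymm] at hA hA'
  refine hausdorffDist_le_of_infDist (matOpNorm_nonneg _) (fun μ hμ => ?_) fun μ hμ => ?_
  · rw [matOpNorm_sub_comm]
    exact infDist_spectrum_le_matOpNorm_sub hA hA' hμ
  · exact infDist_spectrum_le_matOpNorm_sub hA' hA hμ
end

section
/- Let f ∈ C¹(𝕋ⁿ × B) with B ⊂ ℝⁿ, let ω ∈ ℝⁿ with minimal rational subspace F, and let Π_F denote the orthogonal projection onto F. If g ∈ C¹(𝕋ⁿ × B) satisfies {g, l_ω} = 0, then ∂_θ g(θ, I) ∈ F^⊥ for every (θ, I); i.e., Π_F(∂_θ g(θ,I)) = 0. -/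
/-!
A `ℤⁿ`-periodic continuous function invariant under the flow `θ ↦ θ + tω` lives on the torus,
and there its Fourier coefficient of index `k` picks up the factor `exp (2πi t k·ω)` under the
flow; hence only indices with `k·ω = 0` survive. Minimality and rationality of `F` say precisely
that such `k` are orthogonal to all of `F` (split `k` over `ℚ` into a part in `F` and a part
orthogonal to `F`; the first part, after clearing denominators, is an integer vector of `F`
orthogonal to `ω`, so it vanishes). Translating by `u ∈ F` therefore fixes every surviving
coefficient, so it fixes the function, and the derivative of `g` along `(u, 0)` is zero.
-/

open MeasureTheory Real

namespace UnitAddTorus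

variable {d : Type*}

theorem exists_continuousMap_comp_coe_eq {Z : Type*} [TopologicalSpace Z] {h : (d → ℝ) → Z}
    (hc : Continuous h) (hper : ∀ (k : d → ℤ) x, h (x + fun i => (k i : ℝ)) = h x) :
    ∃ H : C(UnitAddTorus d, Z), ∀ x, H (fun i => (x i : UnitAddCircle)) = h x := by
  let q : C(d → ℝ, UnitAddTorus d) := ⟨Pi.map fun _ => QuotientAddGroup.mk, by fun_prop⟩
  have hq : Topology.IsQuotientMap q :=
    (IsOpenQuotientMap.piMap fun _ => QuotientAddGroup.isOpenQuotientMap_mk).isQuotientMap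
  have hfac : Function.FactorsThrough h q := by
    intro x y hxy
    have hk (i : d) : ∃ k : ℤ, k • (1 : ℝ) = -x i + y i :=
      AddSubgroup.mem_zmultiples_iff.1 (QuotientAddGroup.eq.1 (congrFun hxy i))
    choose k hk using hk
    have hy : y = x + fun i => (k i : ℝ) := funext fun i => by
      simp only [Pi.add_apply, ← zsmul_one, hk]
      abel
    rw [hy, hper]
  exact ⟨hq.lift ⟨h, hc⟩ hfac, fun x => DFunLike.congr_fun (hq.lift_comp ⟨h, hc⟩ hfac) x⟩

variable [Fintype d]

theorem mFourier_apply_add (n : d → ℤ) (x y : UnitAddTorus d) :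
    mFourier n (x + y) = mFourier n x * mFourier n y := by
  simp only [mFourier, ContinuousMap.coe_mk, Pi.add_apply, fourier_apply, smul_add,
    AddCircle.toCircle_add, Circle.coe_mul, Finset.prod_mul_distrib]

theorem mFourier_coe_apply (n : d → ℤ) (x : d → ℝ) :
    mFourier n (fun i => (x i : UnitAddCircle)) =
      Complex.exp (2 * π * Complex.I * ↑(∑ i, (n i : ℝ) * x i)) := by
  simp only [mFourier, ContinuousMap.coe_mk, fourier_coe_apply, ← Complex.exp_sum,
    Complex.ofReal_sum, Finset.mul_sum]
  refine congrArg _ (Finset.sum_congr rfl fun i _ => ?_)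
  push_cast
  ring

variable {E : Type*} [NormedAddCommGroup E] [NormedSpace ℂ E]

-- `mFourierCoeff` integrates against the product of the normalised Haar measures, which is not
-- the global `volume` of `UnitAddTorus d`.
theorem mFourierCoeff_eq_integral_pi_haarAddCircle (f : UnitAddTorus d → E) (n : d → ℤ) :
    mFourierCoeff f n = ∫ t, mFourier (-n) t • f t
      ∂(Measure.pi fun _ : d => (AddCircle.haarAddCircle : Measure UnitAddCircle)) :=
  rfl

theorem mFourierCoeff_comp_add_right (f : UnitAddTorus d → E) (a : UnitAddTorus d)
    (n : d → ℤ) : mFourierCoeff (fun z => f (z + a)) n = mFourier n a • mFourierCoeff f n := by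
  have hshift : mFourierCoeff f n = mFourier (-n) a • mFourierCoeff (fun z => f (z + a)) n := by
    simp only [mFourierCoeff_eq_integral_pi_haarAddCircle]
    rw [← integral_add_right_eq_self _ a, ← integral_smul]
    simp only [mFourier_apply_add, smul_smul, mul_comm]
  rw [hshift, smul_smul, ← mFourier_add, add_neg_cancel, mFourier_zero, ContinuousMap.one_apply,
    one_smul]

theorem mFourierCoeff_eq_zero_of_apply_add_eq {f : UnitAddTorus d → E} {a : UnitAddTorus d}
    (hf : ∀ z, f (z + a) = f z) {n : d → ℤ} (hn : mFourier n a ≠ 1) : mFourierCoeff f n = 0 := by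
  have h := mFourierCoeff_comp_add_right f a n
  simp only [hf] at h
  have h' : (mFourier n a - 1) • mFourierCoeff f n = 0 := by
    rw [sub_smul, one_smul, ← h, sub_self]
  exact (smul_eq_zero.1 h').resolve_left (sub_ne_zero.2 hn)

theorem mFourierCoeff_sub (f g : C(UnitAddTorus d, ℂ)) (n : d → ℤ) :
    mFourierCoeff ⇑(f - g) n = mFourierCoeff f n - mFourierCoeff g n := by
  simp only [mFourierCoeff_eq_integral_pi_haarAddCircle, ContinuousMap.sub_apply, smul_sub]
  exact integral_sub
    ((mFourier (-n) * f).continuous.integrable_of_hasCompactSupport (.of_compactSpace _))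
    ((mFourier (-n) * g).continuous.integrable_of_hasCompactSupport (.of_compactSpace _))

theorem eq_zero_of_mFourierCoeff_eq_zero {f : C(UnitAddTorus d, ℂ)}
    (hf : ∀ n, mFourierCoeff f n = 0) : f = 0 := by
  have hc : mFourierCoeff ⇑f = 0 := funext hf
  have h := hasSum_mFourier_series_of_summable (f := f) (by rw [hc]; exact summable_zero)
  have h0 : (fun n : d → ℤ => mFourierCoeff f n • mFourier n) = 0 :=
    funext fun n => by ext; simp [hf]
  rw [h0] at h
  exact h.unique hasSum_zero

theorem apply_add_coe_eq_of_forall_apply_add_coe_smul_eq (f : C(UnitAddTorus d, ℂ))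
    {ω u : d → ℝ} (hf : ∀ (t : ℝ) z, f (z + fun i => ((t • ω) i : UnitAddCircle)) = f z)
    (hu : ∀ k : d → ℤ, ∑ i, (k i : ℝ) * ω i = 0 → ∑ i, (k i : ℝ) * u i = 0)
    (z : UnitAddTorus d) : f (z + fun i => (u i : UnitAddCircle)) = f z := by
  let fu : C(UnitAddTorus d, ℂ) := f.comp (ContinuousMap.addRight fun i => (u i : UnitAddCircle))
  suffices fu - f = 0 from sub_eq_zero.1 (congrArg (· z) this)
  refine eq_zero_of_mFourierCoeff_eq_zero fun k => ?_
  rw [mFourierCoeff_sub, sub_eq_zero]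
  change mFourierCoeff (fun z => f (z + fun i => (u i : UnitAddCircle))) k = _
  rw [mFourierCoeff_comp_add_right]
  by_cases hkω : ∑ i, (k i : ℝ) * ω i = 0
  · rw [mFourier_coe_apply, hu k hkω]
    simp
  · set s := ∑ i, (k i : ℝ) * ω i with hs
    -- flowing for time `1 / (2 s)` multiplies the `k`-th coefficient by `-1`
    have hflip : mFourier k (fun i => (((1 / (2 * s)) • ω) i : UnitAddCircle)) = -1 := by
      have half : ∑ i, (k i : ℝ) * ((1 / (2 * s)) • ω) i = 1 / 2 := by
        simp only [Pi.smul_apply, smul_eq_mul, mul_left_comm (k _ : ℝ), ← Finset.mul_sum, ← hs]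
        field_simp
      rw [mFourier_coe_apply, half, ← Complex.exp_pi_mul_I]
      push_cast
      ring_nf
    rw [mFourierCoeff_eq_zero_of_apply_add_eq (hf _) (by rw [hflip]; norm_num), smul_zero]

end UnitAddTorus

theorem apply_add_eq_of_periodic_of_forall_apply_add_smul_eq {ι : Type*} [Fintype ι]
    {h : (ι → ℝ) → ℂ} (hc : Continuous h)
    (hper : ∀ (k : ι → ℤ) x, h (x + fun i => (k i : ℝ)) = h x) {ω u : ι → ℝ}
    (hω : ∀ (t : ℝ) x, h (x + t • ω) = h x)
    (hu : ∀ k : ι → ℤ, ∑ i, (k i : ℝ) * ω i = 0 → ∑ i, (k i : ℝ) * u i = 0) (x : ι → ℝ) :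
    h (x + u) = h x := by
  obtain ⟨H, hH⟩ := UnitAddTorus.exists_continuousMap_comp_coe_eq hc hper
  have hcoe (x y : ι → ℝ) : (fun i => ((x + y) i : UnitAddCircle)) =
      ((fun i => (x i : UnitAddCircle)) + fun i => (y i : UnitAddCircle) : UnitAddTorus ι) :=
    funext fun i => AddCircle.coe_add (p := 1) _ _
  rw [← hH, ← hH, hcoe]
  refine UnitAddTorus.apply_add_coe_eq_of_forall_apply_add_coe_smul_eq H (fun t z => ?_) hu _
  obtain ⟨z, rfl⟩ : ∃ y : ι → ℝ, (fun i => (y i : UnitAddCircle)) = z :=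
    Function.Surjective.piMap (fun _ => QuotientAddGroup.mk_surjective) z
  rw [← hcoe, hH, hH, hω]

section Rational

theorem exists_ne_zero_intCast_eq_mul {ι : Type*} [Finite ι] (q : ι → ℚ) :
    ∃ N : ℤ, N ≠ 0 ∧ ∃ m : ι → ℤ, ∀ i, (m i : ℚ) = N * q i := by
  obtain ⟨⟨N, hN⟩, hq⟩ := IsLocalization.exist_integer_multiples_of_finite (nonZeroDivisors ℤ) q
  choose m hm using hq
  refine ⟨N, nonZeroDivisors.ne_zero hN, m, fun i => ?_⟩
  rw [← zsmul_eq_mul]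
  exact hm i

variable {ι : Type*} [Fintype ι]

theorem dotProductBilin_isCompl_orthogonal {K : Type*} [Field K] [LinearOrder K]
    [IsStrictOrderedRing K] (W : Submodule K (ι → K)) :
    IsCompl W (LinearMap.BilinForm.orthogonal (dotProductBilin K K) W) := by
  have hrefl : (dotProductBilin K K : LinearMap.BilinForm K (ι → K)).IsRefl := fun v w h => by
    rwa [dotProductBilin_apply_apply, dotProduct_comm] at h
  refine LinearMap.BilinForm.isCompl_orthogonal_of_restrict_nondegenerate hrefl
    (LinearMap.BilinForm.nondegenerate_restrict_of_disjoint_orthogonal _ hrefl ?_)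
  rw [Submodule.disjoint_def]
  intro v hvW hv
  exact dotProduct_self_eq_zero.1 (hv v hvW)

variable {ω : ι → ℝ} {F : Submodule ℝ (ι → ℝ)}

theorem eq_zero_of_ratCast_mem_of_minimal
    (hmin : ∀ k : ι → ℤ, (fun i => (k i : ℝ)) ∈ F → ∑ i, (k i : ℝ) * ω i = 0 → k = 0)
    {q : ι → ℚ} (hqF : (fun i => (q i : ℝ)) ∈ F) (hqω : ∑ i, (q i : ℝ) * ω i = 0) : q = 0 := by
  obtain ⟨N, hN, m, hm⟩ := exists_ne_zero_intCast_eq_mul q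
  have hmR (i : ι) : (m i : ℝ) = N * q i := by
    simpa using congrArg (Rat.cast : ℚ → ℝ) (hm i)
  have hmF : (fun i => (m i : ℝ)) ∈ F := by
    convert F.smul_mem (N : ℝ) hqF using 1
    exact funext hmR
  have hm0 : m = 0 := hmin m hmF (by simp only [hmR, mul_assoc, ← Finset.mul_sum, hqω, mul_zero])
  funext i
  simpa [hm0, hN] using hm i

theorem intCast_orthogonal_of_minimal (hωF : ω ∈ F)
    (hFrat : F = Submodule.span ℝ
      ((fun k : ι → ℤ => fun i => (k i : ℝ)) '' {k | (fun i => (k i : ℝ)) ∈ F}))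
    (hmin : ∀ k : ι → ℤ, (fun i => (k i : ℝ)) ∈ F → ∑ i, (k i : ℝ) * ω i = 0 → k = 0)
    {y : ι → ℤ} (hy : ∑ i, (y i : ℝ) * ω i = 0) {u : ι → ℝ} (hu : u ∈ F) :
    ∑ i, (y i : ℝ) * u i = 0 := by
  let T : Submodule ℚ (ι → ℚ) := (F.restrictScalars ℚ).comap ((Algebra.linearMap ℚ ℝ).compLeft ι)
  have hT {q : ι → ℚ} : q ∈ T ↔ (fun i => (q i : ℝ)) ∈ F := by
    simp [T, LinearMap.compLeft, Function.comp_def]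
  have hyT : (fun i => (y i : ℚ)) ∈ T ⊔ LinearMap.BilinForm.orthogonal (dotProductBilin ℚ ℚ) T := by
    rw [(dotProductBilin_isCompl_orthogonal T).sup_eq_top]
    trivial
  obtain ⟨a, haT, b, hbT, hab⟩ := Submodule.mem_sup.1 hyT
  -- `b` is orthogonal to the integer vectors of `F`, which span `F`
  have hbF : ∀ v ∈ F, ∑ i, (b i : ℝ) * v i = 0 := by
    suffices F ≤ LinearMap.ker (dotProductBilin ℝ ℝ fun i => (b i : ℝ)) from fun v hv => this hv
    rw [hFrat, Submodule.span_le]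
    rintro _ ⟨k, hkF, rfl⟩
    have hbk := hbT (fun i => (k i : ℚ)) (hT.2 (by simpa using hkF))
    simp only [dotProductBilin_apply_apply, dotProduct] at hbk
    simp only [SetLike.mem_coe, LinearMap.mem_ker, dotProductBilin_apply_apply, dotProduct]
    exact_mod_cast (by simpa [mul_comm] using hbk : ∑ i, (b i * k i : ℚ) = 0)
  have hyab (i : ι) : (y i : ℝ) = a i + b i := by
    simpa using congrArg (Rat.cast : ℚ → ℝ) (congrFun hab i).symm
  have ha0 : a = 0 := by
    refine eq_zero_of_ratCast_mem_of_minimal hmin (hT.1 haT) ?_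
    have := hbF ω hωF
    simp only [hyab, add_mul, Finset.sum_add_distrib] at hy
    linarith
  simp only [hyab, ha0, Pi.zero_apply, Rat.cast_zero, zero_add]
  exact hbF u hu

end Rational

section Calculus

variable {E G : Type*} [NormedAddCommGroup E] [NormedSpace ℝ E] [NormedAddCommGroup G]
  [NormedSpace ℝ G] {g : E → G}

theorem apply_add_smul_eq_of_fderiv_apply_eq_zero (hg : Differentiable ℝ g) {v : E}
    (h : ∀ x, fderiv ℝ g x v = 0) (x : E) (t : ℝ) : g (x + t • v) = g x := by
  have hd (s : ℝ) : HasDerivAt (fun τ : ℝ => g (x + τ • v)) 0 s := by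
    simpa [h, Function.comp_def] using (hg (x + s • v)).hasFDerivAt.comp_hasDerivAt s
      (((hasDerivAt_id s).smul_const v).const_add x)
  simpa using
    is_const_of_deriv_eq_zero (fun s => (hd s).differentiableAt) (fun s => (hd s).deriv) t 0

theorem fderiv_apply_eq_zero_of_apply_add_smul_eq {x v : E}
    (h : ∀ t : ℝ, g (x + t • v) = g x) : fderiv ℝ g x v = 0 := by
  by_cases hg : DifferentiableAt ℝ g x
  · rw [← hg.lineDeriv_eq_fderiv, lineDeriv]
    simp [h]
  · simp [fderiv_zero_of_not_differentiableAt hg]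

end Calculus

theorem stmt16_general (n : ℕ) (ω : Fin n → ℝ)
    (F : Submodule ℝ (Fin n → ℝ)) (hωF : ω ∈ F)
    -- `F` is rational: it is spanned by its integer vectors
    (hFrat : F = Submodule.span ℝ
      ((fun k : Fin n → ℤ => fun i => (k i : ℝ)) '' {k | (fun i => (k i : ℝ)) ∈ F}))
    -- minimality of `F` for `ω`
    (hmin : ∀ k : Fin n → ℤ, (fun i => (k i : ℝ)) ∈ F →
      (∑ i, (k i : ℝ) * ω i) = 0 → k = 0)
    (g : (Fin n → ℝ) × (Fin n → ℝ) → ℝ)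
    (hgd : Differentiable ℝ g)
    (hgper : ∀ (k : Fin n → ℤ) (θ I : Fin n → ℝ),
      g (θ + (fun i => (k i : ℝ)), I) = g (θ, I))
    (hbr : ∀ x, fderiv ℝ g x (ω, 0) = 0) :
    ∀ x, ∀ u ∈ F, fderiv ℝ g x (u, 0) = 0 := by
  intro x u hu
  have hflow := apply_add_smul_eq_of_fderiv_apply_eq_zero hgd hbr
  have hslice (t : ℝ) (v : Fin n → ℝ) (p : (Fin n → ℝ) × (Fin n → ℝ)) :
      p + t • ((v, 0) : (Fin n → ℝ) × (Fin n → ℝ)) = (p.1 + t • v, p.2) := by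
    ext <;> simp
  refine fderiv_apply_eq_zero_of_apply_add_smul_eq fun t => ?_
  rw [hslice]
  exact_mod_cast apply_add_eq_of_periodic_of_forall_apply_add_smul_eq
    (h := fun θ => (g (θ, x.2) : ℂ)) (by have := hgd.continuous; fun_prop)
    (fun k θ => by simp only [hgper]) (fun s θ => by rw [← hslice s ω (θ, x.2), hflow])
    (fun k hk => by
      simp only [Pi.smul_apply, smul_eq_mul, mul_left_comm _ t, ← Finset.mul_sum,
        intCast_orthogonal_of_minimal hωF hFrat hmin hk hu, mul_zero]) x.1

/-- Let `ω ∈ ℝⁿ` with minimal rational subspace `F`.  If a C¹ function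
`g` on `𝕋ⁿ × ℝⁿ` (a ℤⁿ-periodic function on `ℝⁿ × ℝⁿ`) satisfies `{g, l_ω} = 0`
(i.e. `Dg(x)(ω, 0) = 0` for all `x`), then `∂_θ g(θ, I) ∈ F^⊥` everywhere, i.e. the
directional derivative of `g` in any angle direction `u ∈ F` vanishes. -/
theorem stmt16 (n : ℕ) (ω : Fin n → ℝ) (hω : ω ≠ 0)
    (F : Submodule ℝ (Fin n → ℝ)) (hωF : ω ∈ F)
    -- `F` is rational: it is spanned by its integer vectors
    (hFrat : F = Submodule.span ℝ
      ((fun k : Fin n → ℤ => fun i => (k i : ℝ)) '' {k | (fun i => (k i : ℝ)) ∈ F}))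
    -- minimality of `F` for `ω`
    (hmin : ∀ k : Fin n → ℤ, (fun i => (k i : ℝ)) ∈ F →
      (∑ i, (k i : ℝ) * ω i) = 0 → k = 0)
    (g : (Fin n → ℝ) × (Fin n → ℝ) → ℝ)
    (hgd : Differentiable ℝ g)
    (hgper : ∀ (k : Fin n → ℤ) (θ I : Fin n → ℝ),
      g (θ + (fun i => (k i : ℝ)), I) = g (θ, I))
    (hbr : ∀ x, fderiv ℝ g x (ω, 0) = 0) :
    ∀ x, ∀ u ∈ F, fderiv ℝ g x (u, 0) = 0 :=
  stmt16_general n ω F hωF hFrat hmin g hgd hgper hbr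
end

section
/- Let N(θ,I) = l_ω(I) + G(θ,I) + f̃(θ,I) be a C¹ Hamiltonian on 𝕋ⁿ × B with {G, l_ω} = 0 and |∂_θ f̃|_{C⁰} ≤ M. Then any solution (θ(t), I(t)) defined on [0, T] with values in 𝕋ⁿ × B satisfies |Π_F(I(t) − I(0))| ≤ |t| M for all t ∈ [0, T], where Π_F is the orthogonal projection onto the minimal rational subspace F of ω and |·| is the supremum norm. -/
/-!
The drift of the actions along `F` is driven by `∂_θ f̃` alone, because `G` is invariant under
all translations of the angles by vectors of `F`. Indeed the periods of `G` form a closed subgroup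
`H` of `ℝⁿ` containing `ℤⁿ` and, as `{G, l_ω} = 0`, the line `ℝω`. A closed subgroup is the sum
of its lineal space `V` (the largest subspace it contains) and a lattice in a complement of `V`,
so an integer vector `k ∉ V` is detected by an integer covector `a` vanishing on `V ∋ ω`. Since
no nonzero integer vector of `F` is orthogonal to `ω`, such an `a` is orthogonal to all of `F`
(this is where rationality of `F` enters, via Cramer's rule for a Gram matrix); hence every
integer vector of `F` lies in `V`, and `F ⊆ H`.

For `w = Π_F(I(t) − I(0))` we then get `d/ds ⟨I(s), w⟩ = −∂_θ f̃ · w`, bounded by `M |w|`, while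
`⟨I(t) − I(0), w⟩ = |w|²`; the mean value inequality gives `|w|² ≤ |t| M |w|`.
-/

open Filter Topology Matrix

section Periods

variable {E β : Type*}

def periodSubgroup [AddGroup E] (g : E → β) : AddSubgroup E where
  carrier := {v | ∀ x, g (x + v) = g x}
  add_mem' {a b} ha hb x := by rw [← add_assoc, hb, ha]
  zero_mem' x := by rw [add_zero]
  neg_mem' {a} ha x := by rw [← ha (x + -a), neg_add_cancel_right]

theorem mem_periodSubgroup [AddGroup E] {g : E → β} {v : E} :
    v ∈ periodSubgroup g ↔ ∀ x, g (x + v) = g x := Iff.rfl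

theorem isClosed_periodSubgroup [AddGroup E] [TopologicalSpace E] [ContinuousAdd E]
    [TopologicalSpace β] [T2Space β] {g : E → β} (hg : Continuous g) :
    IsClosed (periodSubgroup g : Set E) := by
  have : (periodSubgroup g : Set E) = ⋂ x, {v | g (x + v) = g x} := by
    ext v; simp [mem_periodSubgroup]
  rw [this]
  exact isClosed_iInter fun x => isClosed_eq (hg.comp (continuous_const.add continuous_id))
    continuous_const

variable [NormedAddCommGroup E] [NormedSpace ℝ E] [NormedAddCommGroup β] [NormedSpace ℝ β]

theorem hasDerivAt_comp_add_smul {g : E → β} {x v : E} {s : ℝ}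
    (hg : DifferentiableAt ℝ g (x + s • v)) :
    HasDerivAt (fun s : ℝ => g (x + s • v)) (fderiv ℝ g (x + s • v) v) s := by
  have hline : HasDerivAt (fun s : ℝ => x + s • v) v s := by
    simpa using ((hasDerivAt_id s).smul_const v).const_add x
  exact hg.hasFDerivAt.comp_hasDerivAt s hline

theorem smul_mem_periodSubgroup_of_fderiv_eq_zero {g : E → β} (hg : Differentiable ℝ g)
    {v : E} (hv : ∀ x, fderiv ℝ g x v = 0) (t : ℝ) : t • v ∈ periodSubgroup g := by
  intro x
  have hline : ∀ s : ℝ, HasDerivAt (fun s : ℝ => g (x + s • v)) 0 s := fun s => by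
    simpa [hv] using hasDerivAt_comp_add_smul (hg (x + s • v))
  simpa using is_const_of_deriv_eq_zero (fun s => (hline s).differentiableAt)
    (fun s => (hline s).deriv) t 0

theorem fderiv_apply_eq_zero_of_forall_smul_mem_periodSubgroup {g : E → β} {v : E}
    (hv : ∀ t : ℝ, t • v ∈ periodSubgroup g) (x : E) : fderiv ℝ g x v = 0 := by
  by_cases hg : DifferentiableAt ℝ g x
  · have hline := hasDerivAt_comp_add_smul (v := v) (s := 0) (by simpa using hg)
    have hconst : (fun s : ℝ => g (x + s • v)) = fun _ => g x := funext fun s => hv s x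
    rw [hconst] at hline
    simpa using hline.unique (hasDerivAt_const (0 : ℝ) (g x))
  · simp [fderiv_zero_of_not_differentiableAt hg]

end Periods

theorem tendsto_floor_div_mul {ι : Type*} {l : Filter ι} {r : ι → ℝ} (hr : ∀ j, 0 < r j)
    (hr0 : Tendsto r l (𝓝 0)) (t : ℝ) :
    Tendsto (fun j => (⌊t / r j⌋ : ℝ) * r j) l (𝓝 t) := by
  refine tendsto_of_tendsto_of_tendsto_of_le_of_le (by simpa using hr0.const_sub t)
    tendsto_const_nhds (fun j => ?_) (fun j => ?_)
  · have := (div_lt_iff₀ (hr j)).mp (Int.lt_floor_add_one (t / r j))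
    linarith
  · exact (le_div_iff₀ (hr j)).mp (Int.floor_le _)

namespace AddSubgroup

variable {E : Type*} [NormedAddCommGroup E] [NormedSpace ℝ E]

def linealSpace (H : AddSubgroup E) : Submodule ℝ E where
  carrier := {v | ∀ t : ℝ, t • v ∈ H}
  add_mem' ha hb t := by simpa [smul_add] using H.add_mem (ha t) (hb t)
  zero_mem' t := by simp
  smul_mem' c v hv t := by simpa [smul_smul] using hv (t * c)

variable {H : AddSubgroup E}

theorem linealSpace_subset : (H.linealSpace : Set E) ⊆ H := fun v hv => by
  simpa using hv 1

theorem mem_linealSpace_of_tendsto (hH : IsClosed (H : Set E)) {ι : Type*} {l : Filter ι}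
    [l.NeBot] {r : ι → ℝ} {y : ι → E} {u : E} (hr : ∀ j, 0 < r j) (hr0 : Tendsto r l (𝓝 0))
    (hy : Tendsto y l (𝓝 u)) (hry : ∀ j, r j • y j ∈ H) : u ∈ H.linealSpace := fun t => by
  have hmem : ∀ j, ((⌊t / r j⌋ : ℝ) * r j) • y j ∈ H := fun j => by
    simpa [mul_smul, Int.cast_smul_eq_zsmul] using H.zsmul_mem (hry j) ⌊t / r j⌋
  exact hH.mem_of_tendsto ((tendsto_floor_div_mul hr hr0 t).smul hy) (Eventually.of_forall hmem)

theorem exists_pos_eq_zero_of_norm_lt [FiniteDimensional ℝ E] (hH : IsClosed (H : Set E))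
    {W : Submodule ℝ E} (hW : Disjoint W H.linealSpace) :
    ∃ ε > 0, ∀ w ∈ H, w ∈ W → ‖w‖ < ε → w = 0 := by
  by_contra! hsmall
  have hseq : ∀ j : ℕ, ∃ w ∈ H, w ∈ W ∧ ‖w‖ < 1 / (j + 1) ∧ w ≠ 0 := fun j =>
    hsmall (1 / (j + 1)) (by positivity)
  choose w hwH hwW hwlt hw0 using hseq
  have hpos : ∀ j, 0 < ‖w j‖ := fun j => norm_pos_iff.mpr (hw0 j)
  have hsphere : ∀ j, ‖w j‖⁻¹ • w j ∈ Metric.sphere (0 : E) 1 := fun j => by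
    simp [norm_smul, (hpos j).ne']
  obtain ⟨u, hu, ψ, hψ, hconv⟩ := (isCompact_sphere (0 : E) 1).tendsto_subseq hsphere
  have hr0 : Tendsto (fun j => ‖w (ψ j)‖) atTop (𝓝 0) :=
    squeeze_zero (fun j => (hpos _).le) (fun j => (hwlt (ψ j)).le)
      (tendsto_one_div_add_atTop_nhds_zero_nat.comp hψ.tendsto_atTop)
  have huW : u ∈ W := W.closed_of_finiteDimensional.mem_of_tendsto hconv
    (Eventually.of_forall fun j => W.smul_mem _ (hwW (ψ j)))
  have huV : u ∈ H.linealSpace := mem_linealSpace_of_tendsto hH (fun j => hpos (ψ j)) hr0 hconv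
    fun j => by simpa [smul_smul, (hpos (ψ j)).ne'] using hwH (ψ j)
  have : u = 0 := (Submodule.disjoint_def.mp hW) u huW huV
  simp [this] at hu

theorem exists_linearMap_int_of_notMem_linealSpace [FiniteDimensional ℝ E]
    (hH : IsClosed (H : Set E)) (hspan : Submodule.span ℝ (H : Set E) = ⊤) {x : E}
    (hxV : x ∉ H.linealSpace) :
    ∃ φ : E →ₗ[ℝ] ℝ, (∀ h ∈ H, ∃ z : ℤ, φ h = z) ∧ (∀ v ∈ H.linealSpace, φ v = 0) ∧ φ x ≠ 0 := by
  obtain ⟨W, hW⟩ := Submodule.exists_isCompl H.linealSpace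
  set π := W.projectionOnto H.linealSpace hW.symm
  have hπH : ∀ h ∈ H, (π h : E) ∈ H := fun h hh => by
    have := H.sub_mem hh (linealSpace_subset (W.sub_projection_mem hW.symm h))
    simpa [π] using this
  obtain ⟨ε, hε, hsmall⟩ := exists_pos_eq_zero_of_norm_lt hH hW.symm.disjoint
  -- `H` projects onto a lattice of `W`, whose coordinates give the functional
  let L : Submodule ℤ W := (H.toIntSubmodule).comap (W.subtype.restrictScalars ℤ)
  have : DiscreteTopology L := by
    refine discreteTopology_of_isOpen_singleton_zero ?_
    have : ({0} : Set L) = Subtype.val ⁻¹' Metric.ball (0 : W) ε := by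
      ext w
      simp only [Set.mem_singleton_iff, Set.mem_preimage, Metric.mem_ball, dist_zero_right]
      refine ⟨fun hw => by simpa [hw] using hε, fun hw => ?_⟩
      have := hsmall _ w.2 (w : W).2 (by simpa using hw)
      ext; simpa using this
    rw [this]
    exact Metric.isOpen_ball.preimage continuous_subtype_val
  have : IsZLattice ℝ L := by
    refine ⟨eq_top_iff.mpr fun w _ => ?_⟩
    obtain ⟨e, rfl⟩ := Submodule.projectionOnto_surjective hW.symm w
    have he : e ∈ Submodule.span ℝ (H : Set E) := hspan ▸ Submodule.mem_top
    have := Submodule.mem_map_of_mem (f := π) he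
    rw [Submodule.map_span] at this
    exact Submodule.span_mono (by rintro _ ⟨h, hh, rfl⟩; exact hπH h hh) this
  let b := Module.Free.chooseBasis ℤ L
  let bR := b.ofZLatticeBasis ℝ L
  have hπx : π x ≠ 0 := by simpa [π] using hxV
  obtain ⟨i, hi⟩ : ∃ i, bR.repr (π x) i ≠ 0 := by
    by_contra! h
    exact hπx (bR.repr.injective (by ext i; simpa using h i))
  refine ⟨(bR.coord i).comp π, fun h hh => ⟨b.repr ⟨π h, hπH h hh⟩ i, ?_⟩,
    fun v hv => by simp [π, Submodule.projectionOnto_apply_of_mem_right hW.symm hv],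
    by simpa using hi⟩
  simpa using (b.ofZLatticeBasis_repr_apply ℝ L ⟨π h, hπH h hh⟩ i)

end AddSubgroup

namespace Matrix

variable {ι n R : Type*} [Fintype ι] [DecidableEq ι] [Fintype n]
  [CommRing R] [LinearOrder R] [IsStrictOrderedRing R]

theorem det_mul_transpose_ne_zero {B : Matrix ι n R} (hB : LinearIndependent R B) :
    (B * Bᵀ).det ≠ 0 := by
  intro h
  obtain ⟨c, hc0, hc⟩ := exists_mulVec_eq_zero_iff.mpr h
  have hself : (c ᵥ* B) ⬝ᵥ (c ᵥ* B) = 0 := by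
    rw [← dotProduct_mulVec, ← mulVec_transpose, mulVec_mulVec, hc, dotProduct_zero]
  have hsum : ∑ p, c p • B p = 0 := by
    rw [← vecMul_eq_sum]
    exact dotProduct_self_eq_zero.mp hself
  exact hc0 (Fintype.linearIndependent_iff.mp hB c hsum |> funext)

end Matrix

theorem LinearIndependent.exists_dotProduct_sum_smul_eq_mul {ι n R : Type*} [Fintype ι]
    [Fintype n] [CommRing R] [LinearOrder R] [IsStrictOrderedRing R] {B : Matrix ι n R}
    (hB : LinearIndependent R B) (a : n → R) :
    ∃ (c : ι → R) (d : R), d ≠ 0 ∧ ∀ q, B q ⬝ᵥ ∑ p, c p • B p = d * (B q ⬝ᵥ a) := by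
  classical
  -- Cramer's rule for the Gram system `(B Bᵀ) c = det (B Bᵀ) • B a`
  refine ⟨(B * Bᵀ).adjugate *ᵥ (B *ᵥ a), (B * Bᵀ).det, det_mul_transpose_ne_zero hB,
    fun q => ?_⟩
  have hgram : B *ᵥ (((B * Bᵀ).adjugate *ᵥ (B *ᵥ a)) ᵥ* B) = (B * Bᵀ).det • B *ᵥ a := by
    rw [← mulVec_transpose, mulVec_mulVec, mulVec_mulVec, mul_adjugate, smul_mulVec,
      one_mulVec]
  rw [← vecMul_eq_sum]
  exact congrFun hgram q

def intCastLinearMap (ι : Type*) : (ι → ℤ) →ₗ[ℤ] ι → ℝ := (Algebra.linearMap ℤ ℝ).compLeft ι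

theorem intCastLinearMap_apply {ι : Type*} (k : ι → ℤ) :
    intCastLinearMap ι k = fun i => (k i : ℝ) := rfl

theorem intCast_dotProduct {ι : Type*} [Fintype ι] (k l : ι → ℤ) :
    ((k ⬝ᵥ l : ℤ) : ℝ) = intCastLinearMap ι k ⬝ᵥ intCastLinearMap ι l := by
  simp [intCastLinearMap_apply, dotProduct]

universe u

theorem exists_linearIndependent_int_span_eq {ι : Type u} [Finite ι] (S : Set (ι → ℤ)) :
    ∃ (κ : Type u) (_ : Fintype κ) (B : κ → ι → ℤ), LinearIndependent ℤ B ∧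
      Submodule.span ℝ (Set.range fun p i => (B p i : ℝ)) =
        Submodule.span ℝ ((fun k i => (k i : ℝ)) '' S) := by
  obtain ⟨s, hsS, hspan, hind⟩ := exists_linearIndependent ℝ ((fun k i => (k i : ℝ)) '' S)
  choose B hB using fun p : s => (hsS p.2).imp fun _ h => h.2
  have hcomp : (fun p i => (B p i : ℝ)) = Subtype.val := funext hB
  have hindZ : LinearIndependent ℤ fun p i => (B p i : ℝ) := hcomp ▸ hind.restrict_scalars' ℤ
  refine ⟨s, hind.set_finite_of_isNoetherian.fintype, B, hindZ.of_comp (intCastLinearMap ι), ?_⟩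
  rw [hcomp, Subtype.range_coe, hspan]

structure IsMinimalRationalSubspace {n : ℕ} (ω : Fin n → ℝ) (F : Submodule ℝ (Fin n → ℝ)) :
    Prop where
  mem : ω ∈ F
  eq_span_intCast : F = Submodule.span ℝ
    ((fun k : Fin n → ℤ => fun i => (k i : ℝ)) '' {k | (fun i => (k i : ℝ)) ∈ F})
  eq_zero_of_dotProduct_eq_zero : ∀ k : Fin n → ℤ, (fun i => (k i : ℝ)) ∈ F →
    (∑ i, (k i : ℝ) * ω i) = 0 → k = 0

namespace IsMinimalRationalSubspace

variable {n : ℕ} {ω : Fin n → ℝ} {F : Submodule ℝ (Fin n → ℝ)}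

theorem intCast_dotProduct_eq_zero (hF : IsMinimalRationalSubspace ω F)
    {a : Fin n → ℤ} (ha : (fun i => (a i : ℝ)) ⬝ᵥ ω = 0) {x : Fin n → ℝ} (hx : x ∈ F) :
    (fun i => (a i : ℝ)) ⬝ᵥ x = 0 := by
  obtain ⟨κ, _, B, hBind, hBF⟩ :=
    exists_linearIndependent_int_span_eq {k : Fin n → ℤ | (fun i => (k i : ℝ)) ∈ F}
  rw [← hF.eq_span_intCast] at hBF
  obtain ⟨c, d, hd, hcd⟩ := hBind.exists_dotProduct_sum_smul_eq_mul a
  set k := ∑ p, c p • B p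
  have hkF : intCastLinearMap _ k ∈ F := by
    rw [map_sum]
    exact Submodule.sum_mem _ fun p _ => by
      rw [map_zsmul]
      exact zsmul_mem (hBF ▸ Submodule.subset_span ⟨p, rfl⟩) _
  have hk : ∀ y ∈ F, intCastLinearMap _ k ⬝ᵥ y = d * (intCastLinearMap _ a ⬝ᵥ y) := by
    rw [← hBF]
    intro y hy
    induction hy using Submodule.span_induction with
    | mem y hy =>
      obtain ⟨p, rfl⟩ := hy
      have := congrArg (fun z : ℤ => (z : ℝ)) (hcd p)
      simp only [Int.cast_mul, intCast_dotProduct] at this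
      rw [dotProduct_comm (intCastLinearMap _ a), dotProduct_comm]
      exact this
    | zero => simp
    | add y z _ _ hy hz => rw [dotProduct_add, dotProduct_add, hy, hz, mul_add]
    | smul r y _ hy => rw [dotProduct_smul, dotProduct_smul, hy, smul_eq_mul, smul_eq_mul]; ring
  have hk0 : k = 0 := hF.eq_zero_of_dotProduct_eq_zero k hkF
    ((hk ω hF.mem).trans (by rw [intCastLinearMap_apply, ha, mul_zero]))
  have := hk x hx
  rw [hk0, map_zero, zero_dotProduct] at this
  exact (mul_eq_zero.mp this.symm).resolve_left (by exact_mod_cast hd)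

theorem subset_of_isClosed (hF : IsMinimalRationalSubspace ω F)
    {H : AddSubgroup (Fin n → ℝ)} (hH : IsClosed (H : Set (Fin n → ℝ)))
    (hZ : ∀ k : Fin n → ℤ, (fun i => (k i : ℝ)) ∈ H) (hω : ∀ t : ℝ, t • ω ∈ H) :
    (F : Set (Fin n → ℝ)) ⊆ H := by
  classical
  have hsingle : ∀ i, (Pi.single i 1 : Fin n → ℝ) ∈ H := fun i => by
    convert hZ (Pi.single i 1) using 1
    ext j
    simp [Pi.single_apply]
  have hspan : Submodule.span ℝ (H : Set (Fin n → ℝ)) = ⊤ := eq_top_iff.mpr fun v _ => by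
    rw [pi_eq_sum_univ' v]
    exact Submodule.sum_mem _ fun i _ => Submodule.smul_mem _ _ (Submodule.subset_span (hsingle i))
  -- an integer vector of `F` outside the lineal space would be detected by an integer covector
  -- vanishing on `ω`, which cannot exist by minimality of `F`
  have hFV : F ≤ H.linealSpace := by
    rw [hF.eq_span_intCast, Submodule.span_le]
    rintro _ ⟨k, hkF, rfl⟩
    by_contra hkV
    obtain ⟨φ, hφH, hφV, hφk⟩ := H.exists_linearMap_int_of_notMem_linealSpace hH hspan hkV
    choose a ha using fun i => hφH _ (hsingle i)
    have hφ : ∀ x, φ x = (fun i => (a i : ℝ)) ⬝ᵥ x := fun x => by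
      conv_lhs => rw [pi_eq_sum_univ' x]
      simp [dotProduct, ha, mul_comm]
    refine hφk ?_
    rw [hφ]
    exact hF.intCast_dotProduct_eq_zero ((hφ ω).symm.trans (hφV ω hω)) hkF
  exact fun x hx => H.linealSpace_subset (hFV hx)

theorem fderiv_apply_inl_eq_zero {E' β : Type*} [NormedAddCommGroup E'] [NormedSpace ℝ E']
    [NormedAddCommGroup β] [NormedSpace ℝ β] (hF : IsMinimalRationalSubspace ω F)
    {G : (Fin n → ℝ) × E' → β} (hGd : Differentiable ℝ G)
    (hGper : ∀ (k : Fin n → ℤ) (θ : Fin n → ℝ) (I : E'),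
      G (θ + (fun i => (k i : ℝ)), I) = G (θ, I))
    (hGbr : ∀ x, fderiv ℝ G x (ω, 0) = 0) {u : Fin n → ℝ} (hu : u ∈ F) (x : (Fin n → ℝ) × E') :
    fderiv ℝ G x (u, 0) = 0 := by
  let H := (periodSubgroup G).comap (AddMonoidHom.inl (Fin n → ℝ) E')
  have hH : IsClosed (H : Set (Fin n → ℝ)) :=
    (isClosed_periodSubgroup hGd.continuous).preimage (continuous_id.prodMk continuous_const)
  have hZ : ∀ k : Fin n → ℤ, (fun i => (k i : ℝ)) ∈ H := fun k ⟨θ, I⟩ => by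
    simpa using hGper k θ I
  have hω : ∀ t : ℝ, t • ω ∈ H := fun t => by
    simpa [H] using smul_mem_periodSubgroup_of_fderiv_eq_zero hGd hGbr t
  have hFH := hF.subset_of_isClosed hH hZ hω
  exact fderiv_apply_eq_zero_of_forall_smul_mem_periodSubgroup
    (fun t => by simpa [H] using hFH (F.smul_mem t hu)) x

end IsMinimalRationalSubspace

theorem ContinuousLinearMap.apply_inl_eq_sum {ι E' β : Type*} [Fintype ι] [DecidableEq ι]
    [NormedAddCommGroup E'] [NormedSpace ℝ E'] [NormedAddCommGroup β] [NormedSpace ℝ β]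
    (T : (ι → ℝ) × E' →L[ℝ] β) (w : ι → ℝ) : T (w, 0) = ∑ i, w i • T (Pi.single i 1, 0) := by
  have hcomp : T (w, 0) = (T ∘L ContinuousLinearMap.inl ℝ (ι → ℝ) E') w := rfl
  conv_lhs => rw [hcomp, pi_eq_sum_univ' w, map_sum]
  simp

theorem Real.abs_sum_mul_le_sqrt_mul_sqrt {ι : Type*} (s : Finset ι) (f g : ι → ℝ) :
    |∑ i ∈ s, f i * g i| ≤ √(∑ i ∈ s, f i ^ 2) * √(∑ i ∈ s, g i ^ 2) := by
  refine abs_le.mpr ⟨?_, Real.sum_mul_le_sqrt_mul_sqrt s f g⟩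
  have := Real.sum_mul_le_sqrt_mul_sqrt s (fun i => -f i) g
  simp only [neg_mul, Finset.sum_neg_distrib, neg_sq] at this
  linarith

theorem ContinuousLinearMap.abs_apply_inl_le {ι : Type*} [Fintype ι] [DecidableEq ι]
    {E' : Type*} [NormedAddCommGroup E'] [NormedSpace ℝ E'] (T : (ι → ℝ) × E' →L[ℝ] ℝ)
    (w : ι → ℝ) : |T (w, 0)| ≤ √(∑ i, T (Pi.single i 1, 0) ^ 2) * √(∑ i, w i ^ 2) := by
  rw [T.apply_inl_eq_sum, mul_comm]
  exact Real.abs_sum_mul_le_sqrt_mul_sqrt _ _ _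

theorem Real.sqrt_le_of_le_mul_sqrt {x c : ℝ} (hc : 0 ≤ c) (h : x ≤ c * √x) : √x ≤ c := by
  rcases (Real.sqrt_nonneg x).eq_or_lt with hx | hx
  · rwa [← hx]
  · refine le_of_mul_le_mul_right ?_ hx
    rwa [Real.mul_self_sqrt (Real.sqrt_pos.mp hx).le]

theorem sqrt_sum_sq_le_of_hasDerivAt_dotProduct {ι : Type*} [Fintype ι] {I : ℝ → ι → ℝ}
    {w : ι → ℝ} {g' : ℝ → ℝ} {C t : ℝ} (hC : 0 ≤ C)
    (hI : ∀ s, HasDerivAt (fun s => I s ⬝ᵥ w) (g' s) s)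
    (hg' : ∀ s, |g' s| ≤ C * √(∑ i, w i ^ 2)) (horth : (I t - I 0 - w) ⬝ᵥ w = 0) :
    √(∑ i, w i ^ 2) ≤ |t| * C := by
  have hmvt := convex_univ.norm_image_sub_le_of_norm_hasDerivWithin_le
    (fun s _ => (hI s).hasDerivWithinAt) (fun s _ => hg' s) (Set.mem_univ 0) (Set.mem_univ t)
  have hproj : I t ⬝ᵥ w - I 0 ⬝ᵥ w = ∑ i, w i ^ 2 := by
    rw [← sub_dotProduct, ← sub_add_cancel (I t - I 0) w, add_dotProduct, horth, zero_add]
    simp [dotProduct, sq]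
  refine Real.sqrt_le_of_le_mul_sqrt (by positivity) ?_
  calc ∑ i, w i ^ 2 ≤ ‖I t ⬝ᵥ w - I 0 ⬝ᵥ w‖ := hproj ▸ le_abs_self _
    _ ≤ C * √(∑ i, w i ^ 2) * ‖t - 0‖ := hmvt
    _ = |t| * C * √(∑ i, w i ^ 2) := by rw [sub_zero, Real.norm_eq_abs]; ring

theorem stmt18_general (n : ℕ) (ω : Fin n → ℝ)
    (F : Submodule ℝ (Fin n → ℝ)) (hωF : ω ∈ F)
    (hFrat : F = Submodule.span ℝ
      ((fun k : Fin n → ℤ => fun i => (k i : ℝ)) '' {k | (fun i => (k i : ℝ)) ∈ F}))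
    (hmin : ∀ k : Fin n → ℤ, (fun i => (k i : ℝ)) ∈ F →
      (∑ i, (k i : ℝ) * ω i) = 0 → k = 0)
    (G f : (Fin n → ℝ) × (Fin n → ℝ) → ℝ)
    (hGd : Differentiable ℝ G)
    (hGper : ∀ (k : Fin n → ℤ) (θ I : Fin n → ℝ),
      G (θ + (fun i => (k i : ℝ)), I) = G (θ, I))
    -- `{G, l_ω} = 0`
    (hGbr : ∀ x, fderiv ℝ G x (ω, 0) = 0)
    (M : ℝ)
    -- `|∂_θ f̃|_{C⁰} ≤ M`
    (hM : ∀ x, Real.sqrt (∑ i, (fderiv ℝ f x (Pi.single i 1, 0)) ^ 2) ≤ M)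
    -- `P` is the orthogonal projection onto `F`
    (P : (Fin n → ℝ) →ₗ[ℝ] (Fin n → ℝ))
    (hPmem : ∀ x, P x ∈ F)
    (hPorth : ∀ x, ∀ u ∈ F, (∑ i, (x i - P x i) * u i) = 0)
    (θ I : ℝ → Fin n → ℝ)
    -- Hamilton's equations for `N = l_ω + G + f̃`
    (hI : ∀ t i, HasDerivAt (fun s => I s i)
      (-(fderiv ℝ G (θ t, I t) (Pi.single i 1, 0))
        - fderiv ℝ f (θ t, I t) (Pi.single i 1, 0)) t) :
    ∀ t : ℝ, Real.sqrt (∑ i, (P (I t - I 0) i) ^ 2) ≤ |t| * M := by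
  intro t
  set w := P (I t - I 0)
  have hGw : ∀ x, fderiv ℝ G x (w, 0) = 0 :=
    (IsMinimalRationalSubspace.mk hωF hFrat hmin).fderiv_apply_inl_eq_zero hGd hGper hGbr
      (hPmem _)
  have hderiv : ∀ s, HasDerivAt (fun s => I s ⬝ᵥ w)
      (-fderiv ℝ f (θ s, I s) (w, 0)) s := fun s => by
    refine (HasDerivAt.fun_sum fun i _ => (hI s i).mul_const (w i)).congr_deriv ?_
    rw [← sub_zero (-_), ← hGw (θ s, I s), (fderiv ℝ G _).apply_inl_eq_sum,
      (fderiv ℝ f _).apply_inl_eq_sum, ← Finset.sum_neg_distrib, ← Finset.sum_sub_distrib]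
    exact Finset.sum_congr rfl fun i _ => by simp only [smul_eq_mul]; ring
  have hM0 : 0 ≤ M := (Real.sqrt_nonneg _).trans (hM 0)
  refine sqrt_sum_sq_le_of_hasDerivAt_dotProduct hM0 hderiv (fun s => ?_) (hPorth _ w (hPmem _))
  rw [abs_neg]
  exact (fderiv ℝ f _).abs_apply_inl_le w |>.trans
    (mul_le_mul_of_nonneg_right (hM _) (Real.sqrt_nonneg _))

/-- Let `N(θ, I) = l_ω(I) + G(θ, I) + f̃(θ, I)` be C¹ on `𝕋ⁿ × ℝⁿ` with
`{G, l_ω} = 0` and `|∂_θ f̃|_{C⁰} ≤ M`.  Then along every solution `(θ(t), I(t))`,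
`|Π_F(I(t) − I(0))| ≤ |t| M`, where `Π_F` is the orthogonal projection onto the minimal
rational subspace `F` of `ω` (Euclidean-compatible norms). -/
theorem stmt18 (n : ℕ) (ω : Fin n → ℝ) (hω : ω ≠ 0)
    (F : Submodule ℝ (Fin n → ℝ)) (hωF : ω ∈ F)
    (hFrat : F = Submodule.span ℝ
      ((fun k : Fin n → ℤ => fun i => (k i : ℝ)) '' {k | (fun i => (k i : ℝ)) ∈ F}))
    (hmin : ∀ k : Fin n → ℤ, (fun i => (k i : ℝ)) ∈ F →
      (∑ i, (k i : ℝ) * ω i) = 0 → k = 0)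
    (G f : (Fin n → ℝ) × (Fin n → ℝ) → ℝ)
    (hGd : Differentiable ℝ G) (hfd : Differentiable ℝ f)
    (hGper : ∀ (k : Fin n → ℤ) (θ I : Fin n → ℝ),
      G (θ + (fun i => (k i : ℝ)), I) = G (θ, I))
    (hfper : ∀ (k : Fin n → ℤ) (θ I : Fin n → ℝ),
      f (θ + (fun i => (k i : ℝ)), I) = f (θ, I))
    -- `{G, l_ω} = 0`
    (hGbr : ∀ x, fderiv ℝ G x (ω, 0) = 0)
    (M : ℝ)
    -- `|∂_θ f̃|_{C⁰} ≤ M`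
    (hM : ∀ x, Real.sqrt (∑ i, (fderiv ℝ f x (Pi.single i 1, 0)) ^ 2) ≤ M)
    -- `P` is the orthogonal projection onto `F`
    (P : (Fin n → ℝ) →ₗ[ℝ] (Fin n → ℝ))
    (hPmem : ∀ x, P x ∈ F)
    (hPfix : ∀ u ∈ F, P u = u)
    (hPorth : ∀ x, ∀ u ∈ F, (∑ i, (x i - P x i) * u i) = 0)
    (θ I : ℝ → Fin n → ℝ)
    -- Hamilton's equations for `N = l_ω + G + f̃`
    (hθ : ∀ t i, HasDerivAt (fun s => θ s i)
      (ω i + fderiv ℝ G (θ t, I t) (0, Pi.single i 1)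
        + fderiv ℝ f (θ t, I t) (0, Pi.single i 1)) t)
    (hI : ∀ t i, HasDerivAt (fun s => I s i)
      (-(fderiv ℝ G (θ t, I t) (Pi.single i 1, 0))
        - fderiv ℝ f (θ t, I t) (Pi.single i 1, 0)) t) :
    ∀ t : ℝ, Real.sqrt (∑ i, (P (I t - I 0) i) ^ 2) ≤ |t| * M :=
  stmt18_general n ω F hωF hFrat hmin G f hGd hGper hGbr M hM P hPmem hPorth θ I hI
end
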